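/- Let n ≥ 4, α ∈ {0,1}, and G = 2^α.S_n with projection π : G → S_n. Let x ∈ G be such that π(x) is an odd permutation. Then x is an involution if and only if π(x) is an l-fold transposition with l ≡ 1 (mod 4) in the case α = 0 (the cover 2^+.S_n), respectively with l ≡ 3 (mod 4) in the case α = 1 (the cover 2^−.S_n). -/

import Mathlib

/-! Double covers `2^α.S_n` of the symmetric groups, via the presentation with
generators `z, t_1, …, t_{n-1}` and relations `z² = 1`, `t_j² = z^α`,
`(t_j t_{j+1})³ = z^α`, `[z, t_j] = 1`, and `t_j t_k = z t_k t_j` for `|j - k| > 1`.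
Here `α = 0` gives `2^+.S_n` and `α = 1` gives `2^-.S_n`. -/

namespace DoubleCover

/-- Generators: `Sum.inl ()` is `z`; `Sum.inr j` is `t_{j+1}` for `j : Fin (n - 1)`. -/
abbrev Gen (n : ℕ) := Unit ⊕ Fin (n - 1)

/-- The word `z` in the free group on the generators. -/
def zw (n : ℕ) : FreeGroup (Gen n) := FreeGroup.of (Sum.inl ())

/-- The word `t_{j+1}` in the free group on the generators. -/
def tw (n : ℕ) (j : Fin (n - 1)) : FreeGroup (Gen n) := FreeGroup.of (Sum.inr j)

/-- The relations of the presentation of `2^α.S_n`. -/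
def rels (n α : ℕ) : Set (FreeGroup (Gen n)) :=
  {r | r = zw n ^ 2
    ∨ (∃ j, r = tw n j ^ 2 * (zw n ^ α)⁻¹)
    ∨ (∃ j k : Fin (n - 1), (j : ℕ) + 1 = (k : ℕ) ∧
        r = (tw n j * tw n k) ^ 3 * (zw n ^ α)⁻¹)
    ∨ (∃ j, r = zw n * tw n j * (zw n)⁻¹ * (tw n j)⁻¹)
    ∨ (∃ j k : Fin (n - 1), 1 < Nat.dist (j : ℕ) (k : ℕ) ∧
        r = tw n j * tw n k * (zw n * tw n k * tw n j)⁻¹)}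

/-- The double cover `2^α.S_n` of the symmetric group `S_n`. -/
abbrev Cover (n α : ℕ) := PresentedGroup (rels n α)

/-- The central element `z` of `2^α.S_n`. -/
def z (n α : ℕ) : Cover n α := PresentedGroup.of (Sum.inl ())

/-- The generator `t_{j+1}` of `2^α.S_n`, lifting the transposition `(j+1, j+2)`. -/
def t (n α : ℕ) (j : Fin (n - 1)) : Cover n α := PresentedGroup.of (Sum.inr j)

end DoubleCover

/-- A subgroup is an elementary abelian 2-subgroup iff every element squares to `1`
(this forces it to be abelian). -/
def IsElemAbelianTwo {G : Type*} [Group G] (E : Subgroup G) : Prop :=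
  ∀ x ∈ E, x ^ 2 = 1

/-! If `π x` has cycle type `2^l`, it is conjugate to the image of `w = t_1 t_3 ⋯ t_{2l-1}`.
The factors of `w` square to `z^α` and pairwise anticommute up to `z`, so
`w² = z^(α l + l(l-1)/2)`. As the kernel `⟨z⟩` is central of exponent 2, `x` is a central
involution times a conjugate of `w`, hence `x² = w²`. Oddness of `π x` makes `l` odd, and for
odd `l` the parity of `α l + l(l-1)/2` is read off from `l mod 4`. -/

namespace List

variable {G : Type*} [Group G] {c : G}

theorem prod_mul_of_forall_anticommute (hc : c ∈ Subgroup.center G) {g : G} {s : List G}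
    (hs : ∀ h ∈ s, h * g = c * (g * h)) : s.prod * g = c ^ s.length * (g * s.prod) := by
  induction s with
  | nil => simp
  | cons h s ih =>
    have hcs : ∀ k : ℕ, ∀ y : G, y * c ^ k = c ^ k * y := fun k y =>
      Subgroup.mem_center_iff.mp (Subgroup.pow_mem _ hc k) y
    rw [prod_cons, length_cons, mul_assoc, ih fun k hk => hs k (mem_cons_of_mem h hk),
      ← mul_assoc, hcs, mul_assoc, ← mul_assoc h, hs h mem_cons_self, pow_succ]
    simp only [mul_assoc]

theorem prod_sq_of_pairwise_anticommute (hc : c ∈ Subgroup.center G) {d : G} {s : List G}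
    (hsq : ∀ g ∈ s, g ^ 2 = d) (hs : s.Pairwise fun g h => h * g = c * (g * h)) :
    s.prod ^ 2 = d ^ s.length * c ^ s.length.choose 2 := by
  induction s with
  | nil => simp
  | cons g s ih =>
    rw [pairwise_cons] at hs
    have hcs : ∀ k : ℕ, ∀ y : G, y * c ^ k = c ^ k * y := fun k y =>
      Subgroup.mem_center_iff.mp (Subgroup.pow_mem _ hc k) y
    calc (g * s.prod) ^ 2 = g * (s.prod * g) * s.prod := by simp only [sq, mul_assoc]
      _ = c ^ s.length * (g ^ 2 * s.prod ^ 2) := by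
        rw [prod_mul_of_forall_anticommute hc hs.1, ← mul_assoc, hcs]
        simp only [sq, mul_assoc]
      _ = d ^ (s.length + 1) * c ^ (s.length + 1).choose 2 := by
        rw [hsq g mem_cons_self, ih (fun h hh => hsq h (mem_cons_of_mem g hh)) hs.2,
          Nat.choose_succ_succ', Nat.choose_one_right, pow_add c, pow_succ', ← hcs]
        simp only [mul_assoc, ← pow_add, Nat.add_comm]

end List

namespace Nat

theorem choose_two_mod_two (l : ℕ) : l.choose 2 % 2 = l / 2 % 2 := by
  induction l with
  | zero => rfl
  | succ l ih =>
    have h : (l + 1).choose 2 = l + l.choose 2 := by simp [choose_succ_succ']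
    rcases even_or_odd' l with ⟨m, rfl | rfl⟩ <;> omega

theorem two_dvd_mul_add_choose_two_iff {α l : ℕ} (hα : α = 0 ∨ α = 1) (hl : Odd l) :
    2 ∣ α * l + l.choose 2 ↔ l % 4 = if α = 0 then 1 else 3 := by
  have := choose_two_mod_two l
  rw [odd_iff] at hl
  rcases hα with rfl | rfl <;> simp <;> omega

end Nat

namespace Equiv.Perm

variable {β : Type*} [DecidableEq β] [Fintype β]

theorem cycleType_list_prod_of_isSwap {l : List (Perm β)} (hswap : ∀ σ ∈ l, σ.IsSwap)
    (hdisj : l.Pairwise Disjoint) : l.prod.cycleType = Multiset.replicate l.length 2 := by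
  rw [cycleType_eq l rfl (fun σ hσ => (hswap σ hσ).isCycle) hdisj, ← Multiset.coe_replicate]
  refine congrArg _ (List.eq_replicate_iff.mpr ⟨List.length_map _, fun n hn => ?_⟩)
  obtain ⟨σ, hσ, rfl⟩ := List.mem_map.mp hn
  exact card_support_eq_two.mpr (hswap σ hσ)

theorem sign_of_cycleType_eq_replicate_two {σ : Perm β} {l : ℕ}
    (h : σ.cycleType = Multiset.replicate l 2) : sign σ = (-1) ^ l := by
  simp [sign_of_cycleType', h]

end Equiv.Perm

theorem isElemAbelianTwo_zpowers {G : Type*} [Group G] {g : G} (hg : g ^ 2 = 1) :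
    IsElemAbelianTwo (Subgroup.zpowers g) := by
  rintro _ ⟨k, rfl⟩
  change (g ^ k) ^ 2 = 1
  rw [← zpow_natCast, ← zpow_mul, mul_comm, zpow_mul, zpow_natCast, hg, one_zpow]

theorem MonoidHom.sq_eq_sq_of_isConj {G H : Type*} [Group G] [Group H] {π : G →* H}
    (hπ : Function.Surjective π) (hcen : π.ker ≤ Subgroup.center G)
    (hker : IsElemAbelianTwo π.ker) {x w : G} (hw : w ^ 2 ∈ Subgroup.center G)
    (hxw : IsConj (π w) (π x)) : x ^ 2 = w ^ 2 := by
  obtain ⟨τ, hτ⟩ := isConj_iff.mp hxw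
  obtain ⟨g, rfl⟩ := hπ τ
  set k := x * (g * w * g⁻¹)⁻¹
  have hk : k ∈ π.ker := by
    rw [MonoidHom.mem_ker, map_mul, map_inv, map_mul, map_mul, map_inv, hτ, mul_inv_cancel]
  calc x ^ 2 = (k * (g * w * g⁻¹)) ^ 2 := by rw [inv_mul_cancel_right]
    _ = k ^ 2 * (g * w * g⁻¹) ^ 2 :=
        Commute.mul_pow (Subgroup.mem_center_iff.mp (hcen hk) _).symm 2
    _ = w ^ 2 := by
        rw [hker k hk, one_mul, conj_pow, Subgroup.mem_center_iff.mp hw g, mul_inv_cancel_right]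

namespace DoubleCover

variable {n α : ℕ}

theorem mk_eq_one_of_mem_rels {r : FreeGroup (Gen n)} (hr : r ∈ rels n α) :
    PresentedGroup.mk (rels n α) r = 1 :=
  (QuotientGroup.eq_one_iff _).mpr (Subgroup.subset_normalClosure hr)

theorem z_sq : z n α ^ 2 = 1 :=
  mk_eq_one_of_mem_rels (Or.inl rfl)

theorem t_sq (j : Fin (n - 1)) : t n α j ^ 2 = z n α ^ α :=
  mul_inv_eq_one.mp (mk_eq_one_of_mem_rels (Or.inr (Or.inl ⟨j, rfl⟩)))

theorem z_mul_t (j : Fin (n - 1)) : z n α * t n α j = t n α j * z n α :=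
  mul_inv_eq_iff_eq_mul.mp <| mul_inv_eq_one.mp <|
    mk_eq_one_of_mem_rels (Or.inr (Or.inr (Or.inr (Or.inl ⟨j, rfl⟩))))

theorem t_mul_t_of_one_lt_dist {j k : Fin (n - 1)} (h : 1 < Nat.dist j k) :
    t n α j * t n α k = z n α * (t n α k * t n α j) :=
  (mul_inv_eq_one.mp (mk_eq_one_of_mem_rels
    (Or.inr (Or.inr (Or.inr (Or.inr ⟨j, k, h, rfl⟩)))))).trans (mul_assoc _ _ _)

theorem z_mem_center : z n α ∈ Subgroup.center (Cover n α) := by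
  rw [← Subgroup.centralizer_univ, ← Subgroup.coe_top, ← PresentedGroup.closure_range_of,
    Subgroup.centralizer_closure, Subgroup.mem_centralizer_iff]
  rintro _ ⟨_ | j, rfl⟩
  · rfl
  · exact (z_mul_t j).symm

variable {π : Cover n α →* Equiv.Perm (Fin n)}

theorem exists_cycleType_eq_replicate_two (hn : 1 ≤ n)
    (hπt : ∀ j : Fin (n - 1), π (t n α j) =
      Equiv.swap (Fin.castLE (by omega) j) (Fin.castLE (by omega) j.succ))
    {l : ℕ} (hl : 2 * l ≤ n) :
    ∃ w : Cover n α, (π w).cycleType = Multiset.replicate l 2 ∧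
      w ^ 2 = z n α ^ (α * l + l.choose 2) := by
  set s : List (Fin (n - 1)) := List.ofFn fun i : Fin l => ⟨2 * i, by omega⟩
  have hfar : s.Pairwise fun j k : Fin (n - 1) => 1 < Nat.dist j k := by
    rw [List.pairwise_ofFn]
    intro i j hij
    simp only [Nat.dist, Fin.lt_def] at hij ⊢
    omega
  refine ⟨(s.map (t n α)).prod, ?_, ?_⟩
  · rw [map_list_prod, List.map_map, Equiv.Perm.cycleType_list_prod_of_isSwap, List.length_map,
      List.length_ofFn]
    · simp only [List.mem_map, Function.comp_apply]
      rintro _ ⟨j, -, rfl⟩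
      rw [hπt]
      exact ⟨_, _, by simp [Fin.ext_iff], rfl⟩
    · refine List.pairwise_map.mpr (hfar.imp fun {j k} h => ?_)
      simp only [Function.comp_apply, hπt]
      apply Equiv.Perm.disjoint_swap_swap
      simp only [Nat.dist] at h
      simp [Fin.ext_iff]
      omega
  · rw [List.prod_sq_of_pairwise_anticommute z_mem_center (d := z n α ^ α), List.length_map,
      List.length_ofFn, ← pow_mul, ← pow_add]
    · simp [t_sq]
    · exact List.pairwise_map.mpr (hfar.imp fun h =>
        t_mul_t_of_one_lt_dist (by rwa [Nat.dist_comm]))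

theorem sq_eq_z_pow_of_cycleType_eq_replicate_two (hn : 1 ≤ n)
    (hπt : ∀ j : Fin (n - 1), π (t n α j) =
      Equiv.swap (Fin.castLE (by omega) j) (Fin.castLE (by omega) j.succ))
    (hπsurj : Function.Surjective π) (hπker : π.ker = Subgroup.zpowers (z n α))
    {x : Cover n α} {l : ℕ} (h : (π x).cycleType = Multiset.replicate l 2) :
    x ^ 2 = z n α ^ (α * l + l.choose 2) := by
  have hl : 2 * l ≤ n := by simpa [h, mul_comm] using (π x).sum_cycleType_le
  obtain ⟨w, hw, hw2⟩ := exists_cycleType_eq_replicate_two hn hπt hl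
  rw [← hw2]
  exact MonoidHom.sq_eq_sq_of_isConj hπsurj (hπker ▸ Subgroup.zpowers_le.mpr z_mem_center)
    (hπker ▸ isElemAbelianTwo_zpowers z_sq) (hw2 ▸ Subgroup.pow_mem _ z_mem_center _)
    (Equiv.Perm.isConj_of_cycleType_eq (hw.trans h.symm))

end DoubleCover

/-- For `n ≥ 4`, `α ∈ {0, 1}` and `G = 2^α.S_n`: an element `x ∈ G`
projecting to an odd permutation is an involution if and only if `π x` is an `l`-fold
transposition (i.e. has cycle type `(2^l, 1^{n-2l})`) with `l ≡ 1 (mod 4)` if `α = 0`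
(the cover `2^+.S_n`), respectively `l ≡ 3 (mod 4)` if `α = 1` (the cover `2^-.S_n`). -/
theorem odd_involution_iff_lfold_transposition
    (n : ℕ) (hn : 4 ≤ n) (α : ℕ) (hα : α = 0 ∨ α = 1)
    (π : DoubleCover.Cover n α →* Equiv.Perm (Fin n))
    (hπt : ∀ j : Fin (n - 1), π (DoubleCover.t n α j) =
      Equiv.swap (Fin.castLE (by omega) j) (Fin.castLE (by omega) j.succ))
    (hπsurj : Function.Surjective π)
    (hπker : π.ker = Subgroup.zpowers (DoubleCover.z n α))
    (hz : orderOf (DoubleCover.z n α) = 2)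
    (x : DoubleCover.Cover n α)
    (hodd : Equiv.Perm.sign (π x) = -1) :
    x ^ 2 = 1 ↔
      ∃ l : ℕ, l % 4 = (if α = 0 then 1 else 3) ∧
        (π x).cycleType = Multiset.replicate l 2 := by
  have hsq {l : ℕ} := DoubleCover.sq_eq_z_pow_of_cycleType_eq_replicate_two (x := x) (l := l)
    (by omega) hπt hπsurj hπker
  have hz_pow (e : ℕ) : DoubleCover.z n α ^ e = 1 ↔ 2 ∣ e :=
    hz ▸ orderOf_dvd_iff_pow_eq_one.symm
  have hl_odd {l : ℕ} (h : (π x).cycleType = Multiset.replicate l 2) : Odd l := by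
    rwa [Equiv.Perm.sign_of_cycleType_eq_replicate_two h,
      neg_one_pow_eq_neg_one_iff_odd (by decide)] at hodd
  constructor
  · intro hx
    have hct := Equiv.Perm.cycleType_of_pow_prime_eq_one
      (by rw [← map_pow, hx, map_one] : π x ^ 2 = 1)
    refine ⟨_, (Nat.two_dvd_mul_add_choose_two_iff hα (hl_odd hct)).mp ?_, hct⟩
    rwa [← hz_pow, ← hsq hct]
  · rintro ⟨l, hl, hct⟩
    rw [hsq hct, hz_pow]
    exact (Nat.two_dvd_mul_add_choose_two_iff hα (hl_odd hct)).mpr hl
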